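/- arXiv:1111.3787 — 5 statements merged into one kernel-verified Lean document; each statement's English description precedes it below -/
import Mathlib

section
/- Let K be a totally real number field of degree n with real embeddings σ_1, …, σ_n, let α ∈ K be totally positive, and let I = g·O_K be a nonzero principal ideal of O_K (g ∈ O_K, g ≠ 0). Then the set { ∏_{i=1}^{n} √(σ_i(α)) · |σ_i(y)| : y ∈ I, y ≠ 0 } has a least element, equal to √(N_{K/ℚ}(α)) · |N_{K/ℚ}(g)|, and moreover |N_{K/ℚ}(g)| = N(I), the absolute norm of the ideal I. -/
open NumberField

/-! Since the `σᵢ` are all the embeddings of `K`, the product attached to `y` is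
`√N(α) · |N(y)|`, and for `y ∈ g𝓞_K` nonzero the integer `N(g)` divides the nonzero integer `N(y)`. -/

theorem Algebra.norm_eq_prod_of_injective_realEmbeddings {K ι : Type*} [Field K] [NumberField K]
    [Fintype ι] (σ : ι → K →+* ℝ) (hσ : Function.Injective σ)
    (hcard : Fintype.card ι = Module.finrank ℚ K) (x : K) :
    (Algebra.norm ℚ x : ℝ) = ∏ i, σ i x := by
  let τ : ι → K →ₐ[ℚ] ℂ := fun i => (Complex.ofRealHom.comp (σ i)).toRatAlgHom
  have hτ : Function.Bijective τ := by
    refine (Fintype.bijective_iff_injective_and_card τ).2 ⟨fun i j hij => hσ ?_, ?_⟩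
    · ext a
      exact Complex.ofReal_injective (AlgHom.congr_fun hij a)
    · rw [hcard, AlgHom.card]
  apply Complex.ofReal_injective
  rw [Complex.ofReal_ratCast, ← eq_ratCast (algebraMap ℚ ℂ), Algebra.norm_eq_prod_embeddings,
    Complex.ofReal_prod, ← Fintype.prod_bijective τ hτ (fun i => (σ i x : ℂ)) (· x) fun i => rfl]

theorem Algebra.abs_norm_le_of_dvd {K : Type*} [Field K] [NumberField K] {g y : 𝓞 K}
    (hgy : g ∣ y) (hy : y ≠ 0) : |Algebra.norm ℚ (g : K)| ≤ |Algebra.norm ℚ (y : K)| := by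
  rw [← Algebra.coe_norm_int, ← Algebra.coe_norm_int, ← Int.cast_abs, ← Int.cast_abs,
    Int.cast_le, Int.abs_eq_natAbs, Int.abs_eq_natAbs, Int.ofNat_le]
  exact Int.natAbs_le_of_dvd_ne_zero (map_dvd _ hgy) (Algebra.norm_ne_zero_iff.mpr hy)

theorem prod_sqrt_mul_abs_eq_sqrt_norm_mul_abs_norm {K ι : Type*} [Field K] [NumberField K]
    [Fintype ι] (σ : ι → K →+* ℝ) (hσ : Function.Injective σ)
    (hcard : Fintype.card ι = Module.finrank ℚ K) {α : K} (hα : ∀ i, 0 < σ i α) (y : K) :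
    ∏ i, √(σ i α) * |σ i y| = √(Algebra.norm ℚ α) * |(Algebra.norm ℚ y : ℝ)| := by
  rw [Finset.prod_mul_distrib, Algebra.norm_eq_prod_of_injective_realEmbeddings σ hσ hcard,
    Algebra.norm_eq_prod_of_injective_realEmbeddings σ hσ hcard, Real.sqrt_prod _
      fun i _ => (hα i).le, Finset.abs_prod]

/-- For a totally real number field `K` of degree `n` with real
embeddings `σ₁, …, σₙ`, a totally positive `α ∈ K`, and a nonzero principal ideal
`I = g·𝓞 K`, the set `{ ∏ᵢ √(σᵢ α) · |σᵢ y| : y ∈ I, y ≠ 0 }` has a least element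
equal to `√(N_{K/ℚ} α) · |N_{K/ℚ} g|`, and `|N_{K/ℚ} g| = N(I)`. -/
theorem minProductDistance_of_principal_ideal
    (K : Type*) [Field K] [NumberField K] (n : ℕ)
    (hn : Module.finrank ℚ K = n)
    (σ : Fin n → (K →+* ℝ)) (hσ : Function.Bijective σ)
    (α : K) (hα : ∀ i, 0 < σ i α)
    (g : 𝓞 K) (hg : g ≠ 0) :
    IsLeast { x : ℝ | ∃ y ∈ Ideal.span ({g} : Set (𝓞 K)), y ≠ 0 ∧
        x = ∏ i, Real.sqrt (σ i α) * |σ i (algebraMap (𝓞 K) K y)| }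
      (Real.sqrt (Algebra.norm ℚ α) * |(Algebra.norm ℚ (algebraMap (𝓞 K) K g) : ℝ)|) ∧
    |Algebra.norm ℚ (algebraMap (𝓞 K) K g)| =
      (Ideal.absNorm (Ideal.span ({g} : Set (𝓞 K))) : ℚ) := by
  have hval := prod_sqrt_mul_abs_eq_sqrt_norm_mul_abs_norm σ hσ.injective
    (by rw [Fintype.card_fin, hn]) hα
  refine ⟨⟨⟨g, Ideal.mem_span_singleton_self g, hg, (hval _).symm⟩, ?_⟩, ?_⟩
  · rintro x ⟨y, hy, hy0, rfl⟩
    rw [hval]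
    refine mul_le_mul_of_nonneg_left ?_ (Real.sqrt_nonneg _)
    exact_mod_cast Algebra.abs_norm_le_of_dvd (Ideal.mem_span_singleton.mp hy) hy0
  · rw [Ideal.absNorm_span_singleton, ← Algebra.coe_norm_int, Nat.cast_natAbs, Int.cast_abs]
end

section
/- Let r ≥ 3 be an integer, ζ a primitive 2^r-th root of unity in ℂ, and K = ℚ(ζ + ζ^{-1}). For every integer k: Tr_{K/ℚ}(ζ^k + ζ^{-k}) = 0 if gcd(k, 2^r) < 2^{r-1}; Tr_{K/ℚ}(ζ^k + ζ^{-k}) = -2^{r-1} if gcd(k, 2^r) = 2^{r-1}; and Tr_{K/ℚ}(ζ^k + ζ^{-k}) = 2^{r-1} if gcd(k, 2^r) = 2^r (i.e. 2^r divides k). -/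
/-!
Since ζ is a root of `X² - (ζ + ζ⁻¹) X + 1` but is not real, `ℚ(ζ)` has degree 2 over
`K = ℚ(ζ + ζ⁻¹)`. Hence `2 Tr_{K/ℚ}(x) = Tr_{ℚ(ζ)/ℚ}(ζ^k + ζ^{-k})`, the sum of `μ^k + μ^{-k}` over
the primitive `2^r`-th roots of unity `μ`. These are the odd powers of ζ, so the sum of the `μ^k`
is `ζ^k` times a geometric sum in `ζ^{2k}`: it vanishes unless `2^{r-1} ∣ k`, and otherwise it is
`2^{r-1} ζ^k = ±2^{r-1}`.
-/

open Finset Polynomial IntermediateField Module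
open scoped IntermediateField ComplexConjugate

namespace IsPrimitiveRoot

variable {K : Type*} [Field K]

theorem geom_sum_zpow {η : K} {m : ℕ} (hη : IsPrimitiveRoot η m) (k : ℤ) :
    ∑ a ∈ range m, (η ^ k) ^ a = if (m : ℤ) ∣ k then (m : K) else 0 := by
  split_ifs with hk
  · simp [(hη.zpow_eq_one_iff_dvd k).2 hk]
  · have hne : η ^ k ≠ 1 := mt (hη.zpow_eq_one_iff_dvd k).1 hk
    have hpow : (η ^ k) ^ m = 1 := by
      rw [← zpow_natCast, ← zpow_mul, mul_comm, zpow_mul, zpow_natCast, hη.pow_eq_one, one_zpow]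
    rw [geom_sum_eq hne, hpow, sub_self, zero_div]

theorem primitiveRoots_two_pow_succ_eq_image {R : Type*} [CommRing R] [IsDomain R]
    [DecidableEq R] {ζ : R} {n : ℕ} (hζ : IsPrimitiveRoot ζ (2 ^ (n + 1))) :
    primitiveRoots (2 ^ (n + 1)) R = (range (2 ^ n)).image fun a ↦ ζ ^ (2 * a + 1) := by
  ext μ
  rw [mem_primitiveRoots (by positivity), hζ.isPrimitiveRoot_iff, mem_image]
  simp only [Nat.coprime_pow_right_iff n.succ_pos, Nat.coprime_two_right, mem_range]
  constructor
  · rintro ⟨_, hi, ⟨a, rfl⟩, rfl⟩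
    exact ⟨a, by rw [pow_succ] at hi; omega, rfl⟩
  · rintro ⟨a, ha, rfl⟩
    exact ⟨2 * a + 1, by rw [pow_succ]; omega, odd_two_mul_add_one a, rfl⟩

theorem pow_two_pow_eq_neg_one {ζ : K} {n : ℕ} (hζ : IsPrimitiveRoot ζ (2 ^ (n + 1))) :
    ζ ^ 2 ^ n = -1 :=
  (hζ.pow (by positivity) (pow_succ 2 n)).eq_neg_one_of_two_right

theorem sum_primitiveRoots_two_pow_succ_zpow {ζ : K} {n : ℕ}
    (hζ : IsPrimitiveRoot ζ (2 ^ (n + 1))) (k : ℤ) :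
    ∑ μ ∈ primitiveRoots (2 ^ (n + 1)) K, μ ^ k =
      if (2 ^ (n + 1) : ℤ) ∣ k then 2 ^ n else if (2 ^ n : ℤ) ∣ k then -2 ^ n else 0 := by
  classical
  have hζ0 : ζ ≠ 0 := hζ.ne_zero (by positivity)
  have hodd (a : ℕ) : (ζ ^ (2 * a + 1)) ^ k = ζ ^ k * ((ζ ^ 2) ^ k) ^ a := by
    simp only [← zpow_natCast, ← zpow_mul, ← zpow_add₀ hζ0]
    congr 1
    push_cast
    ring
  have hsq : IsPrimitiveRoot (ζ ^ 2) (2 ^ n) := hζ.pow (by positivity) (pow_succ' 2 n)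
  rw [hζ.primitiveRoots_two_pow_succ_eq_image, sum_image fun a ha b hb h ↦ by
      have := hζ.pow_inj (by simp [pow_succ] at ha ⊢; omega) (by simp [pow_succ] at hb ⊢; omega) h
      omega]
  simp only [hodd, ← mul_sum, hsq.geom_sum_zpow]
  by_cases hk : (2 ^ n : ℤ) ∣ k
  · obtain ⟨t, rfl⟩ := hk
    have hdvd : (2 ^ (n + 1) : ℤ) ∣ 2 ^ n * t ↔ Even t := by
      rw [pow_succ, mul_dvd_mul_iff_left (by positivity), even_iff_two_dvd]
    have hneg : ζ ^ (2 ^ n : ℤ) = -1 := by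
      rw [← hζ.pow_two_pow_eq_neg_one]; exact_mod_cast zpow_natCast ζ (2 ^ n)
    simp only [zpow_mul, hneg, neg_one_zpow_eq_ite, hdvd, Nat.cast_pow, Nat.cast_ofNat,
      dvd_mul_right, if_true]
    split_ifs <;> ring
  · have : ¬(2 ^ (n + 1) : ℤ) ∣ k := fun h ↦ hk ((pow_dvd_pow 2 n.le_succ).trans h)
    simp [hk, this]

end IsPrimitiveRoot

theorem Int.two_pow_dvd_iff_two_pow_le_gcd {k : ℤ} {m r : ℕ} (hm : m ≤ r) :
    (2 ^ m : ℤ) ∣ k ↔ 2 ^ m ≤ k.gcd (2 ^ r) := by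
  obtain ⟨j, -, hj⟩ := (Nat.dvd_prime_pow Nat.prime_two).1 (Int.gcd_dvd_natAbs_right k (2 ^ r))
  have hdvd : (2 ^ m : ℤ) ∣ k ↔ 2 ^ m ∣ k.gcd (2 ^ r) := by
    constructor
    · intro h
      exact_mod_cast Int.dvd_coe_gcd h (pow_dvd_pow 2 hm)
    · intro h
      exact (Int.natCast_dvd_natCast.2 h).trans (by exact_mod_cast Int.gcd_dvd_left k _)
  rw [hdvd, hj, Nat.pow_dvd_pow_iff_le_right (by norm_num), Nat.pow_le_pow_iff_right (by norm_num)]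

theorem minpoly.natDegree_eq_two {K L : Type*} [Field K] [Field L] [Algebra K L] {α : L}
    {p : K[X]} (hp : p.natDegree = 2) (hα : Polynomial.aeval α p = 0)
    (hαK : α ∉ (algebraMap K L).range) :
    (minpoly K α).natDegree = 2 := by
  have hp0 : p ≠ 0 := ne_zero_of_natDegree_gt (hp ▸ two_pos)
  have hle := hp ▸ natDegree_le_of_dvd (minpoly.dvd K α hα) hp0
  have hpos := minpoly.natDegree_pos (IsAlgebraic.isIntegral ⟨p, hp0, hα⟩)
  have hne : (minpoly K α).natDegree ≠ 1 := fun h ↦ hαK (minpoly.natDegree_eq_one_iff.mp h)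
  omega

namespace IntermediateField

variable {F E : Type*} [Field F] [Field E] [Algebra F E]

theorem finrank_adjoin_adjoin_add_inv {z : E} (hz : z ∉ F⟮z + z⁻¹⟯) :
    finrank F⟮z + z⁻¹⟯ F⟮z + z⁻¹⟯⟮z⟯ = 2 := by
  have hz0 : z ≠ 0 := by rintro rfl; exact hz (zero_mem _)
  set c := AdjoinSimple.gen F (z + z⁻¹)
  have hroot : Polynomial.aeval z (C 1 * X ^ 2 + C (-c) * X + C 1) = 0 := by
    simp only [map_add, map_mul, aeval_C, aeval_X, map_pow, map_one, map_neg,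
      IntermediateField.algebraMap_apply, c, AdjoinSimple.coe_gen]
    field_simp
    ring
  have hdeg := minpoly.natDegree_eq_two (natDegree_quadratic one_ne_zero) hroot
    fun ⟨y, hy⟩ ↦ hz (Set.mem_of_eq_of_mem hy.symm y.2)
  rwa [adjoin.finrank (minpoly.ne_zero_iff.mp (ne_zero_of_natDegree_gt (hdeg ▸ two_pos)))]

theorem trace_inclusion {K L : IntermediateField F E} (h : K ≤ L) [FiniteDimensional F L]
    (x : K) :
    Algebra.trace F L (inclusion h x) = finrank K (extendScalars h) • Algebra.trace F K x := by
  have : FiniteDimensional F (extendScalars h) := ‹FiniteDimensional F L›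
  have : FiniteDimensional F K := FiniteDimensional.left F K (extendScalars h)
  have : FiniteDimensional K (extendScalars h) := FiniteDimensional.right F K _
  have : Module.Free K (extendScalars h) := Module.Free.of_divisionRing _ _
  change Algebra.trace F (extendScalars h) (algebraMap K (extendScalars h) x) = _
  rw [← Algebra.trace_trace (S := K), Algebra.trace_algebraMap, map_nsmul]

end IntermediateField

theorem Complex.conj_eq_self_of_mem_adjoin {w : ℂ} (hw : conj w = w) {y : ℂ} (hy : y ∈ ℚ⟮w⟯) :
    conj y = y := by
  have hext : (starRingEnd ℂ).toRatAlgHom.comp ℚ⟮w⟯.val = ℚ⟮w⟯.val :=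
    adjoin_algHom_ext ℚ fun x hx ↦ by
      rw [Set.mem_singleton_iff] at hx
      subst hx
      exact hw
  exact DFunLike.congr_fun hext ⟨y, hy⟩

namespace IsPrimitiveRoot

variable {ζ : ℂ} {n : ℕ}

theorem notMem_adjoin_add_inv (hζ : IsPrimitiveRoot ζ n) (hn : 2 < n) : ζ ∉ ℚ⟮ζ + ζ⁻¹⟯ := by
  have hconj : conj ζ = ζ⁻¹ :=
    (Complex.inv_eq_conj (Complex.norm_eq_one_of_pow_eq_one hζ.pow_eq_one (by omega))).symm
  intro hmem
  have hreal : conj ζ = ζ :=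
    Complex.conj_eq_self_of_mem_adjoin (by simp [hconj, add_comm]) hmem
  have hsq : ζ ^ 2 = 1 := by
    rw [sq]; nth_rewrite 2 [← hreal]; rw [hconj, mul_inv_cancel₀ (hζ.ne_zero (by omega))]
  have := Nat.le_of_dvd two_pos (hζ.dvd_of_pow_eq_one 2 hsq)
  omega

theorem trace_adjoin_gen_zpow [NeZero n] (hζ : IsPrimitiveRoot ζ n) (k : ℤ) :
    (Algebra.trace ℚ ℚ⟮ζ⟯ (AdjoinSimple.gen ℚ ζ ^ k) : ℂ) = ∑ μ ∈ primitiveRoots n ℂ, μ ^ k := by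
  have : IsCyclotomicExtension {n} ℚ ℚ⟮ζ⟯ :=
    (IntermediateField.isCyclotomicExtension_singleton_iff_eq_adjoin n ℚ ℂ _ hζ).mpr rfl
  have : FiniteDimensional ℚ ℚ⟮ζ⟯ := IsCyclotomicExtension.finiteDimensional {n} ℚ _
  have hgen : IsPrimitiveRoot (AdjoinSimple.gen ℚ ζ) n :=
    IsPrimitiveRoot.coe_submonoidClass_iff.mp hζ
  have hirr := cyclotomic.irreducible_rat (NeZero.pos n)
  rw [← eq_ratCast (algebraMap ℚ ℂ), trace_eq_sum_embeddings ℂ,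
    ← sum_coe_sort (primitiveRoots n ℂ),
    ← (hgen.embeddingsEquivPrimitiveRoots ℂ hirr).sum_comp fun μ ↦ (μ : ℂ) ^ k]
  simp

theorem two_mul_trace_adjoin_add_inv (hζ : IsPrimitiveRoot ζ n) (hn : 2 < n) (k : ℤ)
    (x : ℚ⟮ζ + ζ⁻¹⟯) (hx : (x : ℂ) = ζ ^ k + ζ ^ (-k)) :
    2 * (Algebra.trace ℚ ℚ⟮ζ + ζ⁻¹⟯ x : ℂ) =
      ∑ μ ∈ primitiveRoots n ℂ, μ ^ k + ∑ μ ∈ primitiveRoots n ℂ, μ ^ (-k) := by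
  have : NeZero n := ⟨by omega⟩
  have hζmem : ζ ∈ ℚ⟮ζ⟯ := mem_adjoin_simple_self ℚ ζ
  have hle : ℚ⟮ζ + ζ⁻¹⟯ ≤ ℚ⟮ζ⟯ := adjoin_simple_le_iff.2 (add_mem hζmem (inv_mem hζmem))
  have : FiniteDimensional ℚ ℚ⟮ζ⟯ :=
    adjoin.finiteDimensional (hζ.isIntegral (NeZero.pos n)).tower_top
  have hincl : inclusion hle x = AdjoinSimple.gen ℚ ζ ^ k + AdjoinSimple.gen ℚ ζ ^ (-k) := by
    have hcoe (m : ℤ) : ((AdjoinSimple.gen ℚ ζ ^ m : ℚ⟮ζ⟯) : ℂ) = ζ ^ m :=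
      map_zpow₀ (algebraMap ℚ⟮ζ⟯ ℂ) _ m
    apply Subtype.ext
    rw [coe_inclusion, hx, AddMemClass.coe_add, hcoe, hcoe]
  have htower := trace_inclusion hle x
  rw [extendScalars_adjoin, finrank_adjoin_adjoin_add_inv (hζ.notMem_adjoin_add_inv hn), hincl,
    map_add] at htower
  rw [← hζ.trace_adjoin_gen_zpow, ← hζ.trace_adjoin_gen_zpow]
  exact_mod_cast htower.symm

theorem trace_adjoin_add_inv_two_pow (hζ : IsPrimitiveRoot ζ (2 ^ (n + 1))) (hn : 1 ≤ n)
    (k : ℤ) (x : ℚ⟮ζ + ζ⁻¹⟯) (hx : (x : ℂ) = ζ ^ k + ζ ^ (-k)) :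
    Algebra.trace ℚ ℚ⟮ζ + ζ⁻¹⟯ x =
      if (2 ^ (n + 1) : ℤ) ∣ k then 2 ^ n else if (2 ^ n : ℤ) ∣ k then -2 ^ n else 0 := by
  have h2 : 2 < 2 ^ (n + 1) :=
    lt_of_lt_of_le (by norm_num) (Nat.pow_le_pow_right two_pos (by omega : 2 ≤ n + 1))
  have hneg : ∑ μ ∈ primitiveRoots (2 ^ (n + 1)) ℂ, μ ^ (-k) =
      ∑ μ ∈ primitiveRoots (2 ^ (n + 1)) ℂ, μ ^ k := by
    rw [hζ.sum_primitiveRoots_two_pow_succ_zpow, hζ.sum_primitiveRoots_two_pow_succ_zpow]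
    simp only [dvd_neg]
  have htrace := hζ.two_mul_trace_adjoin_add_inv h2 k x hx
  rw [hneg, hζ.sum_primitiveRoots_two_pow_succ_zpow] at htrace
  apply Rat.cast_injective (α := ℂ)
  split_ifs at htrace ⊢ <;> push_cast <;> linear_combination htrace / 2

end IsPrimitiveRoot

/-- For `r ≥ 3`, `ζ` a primitive `2^r`-th root of unity and
`K = ℚ(ζ + ζ⁻¹)`, the trace of `ζ^k + ζ^{-k}` is `0`, `-2^{r-1}` or `2^{r-1}`
according to whether `gcd(k, 2^r)` is `< 2^{r-1}`, `= 2^{r-1}` or `= 2^r`. -/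
theorem trace_zeta_pow_add_zeta_pow_neg
    (r : ℕ) (hr : 3 ≤ r) (ζ : ℂ) (hζ : IsPrimitiveRoot ζ (2 ^ r))
    (k : ℤ) (x : ℚ⟮ζ + ζ⁻¹⟯) (hx : (x : ℂ) = ζ ^ k + ζ ^ (-k)) :
    (Int.gcd k (2 ^ r) < 2 ^ (r - 1) → Algebra.trace ℚ ℚ⟮ζ + ζ⁻¹⟯ x = 0) ∧
    (Int.gcd k (2 ^ r) = 2 ^ (r - 1) → Algebra.trace ℚ ℚ⟮ζ + ζ⁻¹⟯ x = -2 ^ (r - 1)) ∧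
    (Int.gcd k (2 ^ r) = 2 ^ r → Algebra.trace ℚ ℚ⟮ζ + ζ⁻¹⟯ x = 2 ^ (r - 1)) := by
  obtain ⟨n, rfl⟩ : ∃ n, r = n + 1 := ⟨r - 1, by omega⟩
  rw [Nat.add_sub_cancel, hζ.trace_adjoin_add_inv_two_pow (by omega) k x hx]
  simp only [Int.two_pow_dvd_iff_two_pow_le_gcd (Nat.le_add_right n 1),
    Int.two_pow_dvd_iff_two_pow_le_gcd le_rfl]
  have hlt : 2 ^ n < 2 ^ (n + 1) := Nat.pow_lt_pow_right one_lt_two n.lt_succ_self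
  refine ⟨fun hg ↦ ?_, fun hg ↦ ?_, fun hg ↦ ?_⟩
  · rw [if_neg (by omega), if_neg (by omega)]
  · rw [if_neg (by omega), if_pos (by omega)]
  · rw [if_pos (by omega)]
end

section
/- With K = ℚ(ζ + ζ^{-1}) for ζ a primitive 2^r-th root of unity (r ≥ 5), n = 2^{r-2}, O_K = ℤ[ζ + ζ^{-1}], e_0 = 1 and e_i = ζ^i + ζ^{-i}, the ℤ-submodule I of O_K spanned by {2e_0, e_1, e_2, …, e_{n-1}} equals the principal ideal (ζ + ζ^{-1})·O_K = e_1·O_K. In particular I is a principal ideal of O_K. -/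
/-! The generators are values at `ξ` of the Dickson polynomials `D_i = dickson 1 1 i`:
`2 e₀ = 2 = D_0(ξ)` and `e_i = ζ^i + ζ^{-i} = D_i(ξ)`, with `X D_{i+1} = D_{i+2} + D_i`.
Moreover `D_n(ξ) = ζ^n + ζ^{-n} = 0` since `ζ^n` is a primitive fourth root of unity.
By the recurrence, the span of `D_0(ξ), …, D_{n-1}(ξ)` is stable under multiplication by `ξ`,
so it is a `ℤ[ξ]`-module containing `ξ = D_1(ξ)` and hence contains `ξ ℤ[ξ]`. Conversely,
modulo `ξ ℤ[ξ]` the recurrence reads `D_{i+2} ≡ -D_i`; as `n` is even this gives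
`2 = D_0(ξ) ≡ ±D_n(ξ) = 0`, and then every `D_i(ξ)` lies in `ξ ℤ[ξ]`. -/

open Polynomial
open scoped IntermediateField

theorem mul_mem_of_mem_adjoin_singleton {R A : Type*} [CommSemiring R] [CommSemiring A]
    [Algebra R A] {ξ z y : A} {M : Submodule R A} (hM : ∀ y ∈ M, ξ * y ∈ M)
    (hz : z ∈ Algebra.adjoin R {ξ}) (hy : y ∈ M) : z * y ∈ M := by
  induction hz using Algebra.adjoin_induction generalizing y with
  | mem x hx => rw [Set.mem_singleton_iff.mp hx]; exact hM y hy
  | algebraMap r => rw [← Algebra.smul_def]; exact M.smul_mem r hy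
  | add a b _ _ ha hb => rw [add_mul]; exact M.add_mem (ha hy) (hb hy)
  | mul a b _ _ ha hb => rw [mul_assoc]; exact ha (hb hy)

theorem add_two_mul_mem_iff_of_add_mem {A S : Type*} [AddGroup A] [SetLike S A]
    [AddSubgroupClass S A] {M : S} {c : ℕ → A} (h : ∀ j, c (j + 2) + c j ∈ M) (i k : ℕ) :
    c (i + 2 * k) ∈ M ↔ c i ∈ M := by
  induction k with
  | zero => rfl
  | succ k ih =>
    rw [← ih, show i + 2 * (k + 1) = i + 2 * k + 2 by ring]
    exact ⟨fun hx ↦ (add_mem_cancel_left hx).mp (h _),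
      fun hx ↦ (add_mem_cancel_right hx).mp (h _)⟩

section Dickson

variable {R A : Type*} [CommRing R] [CommRing A] [Algebra R A] {ξ : A}

theorem aeval_dickson_one_one_add_of_mul_eq_one {x y : A} (h : x * y = 1) (n : ℕ) :
    aeval (x + y) (dickson 1 (1 : R) n) = x ^ n + y ^ n := by
  rw [aeval_def, eval₂_eq_eval_map, map_dickson, map_one, dickson_one_one_eval_add_inv x y h]

theorem mul_aeval_dickson_one_one (i : ℕ) :
    ξ * aeval ξ (dickson 1 (1 : R) (i + 1)) =
      aeval ξ (dickson 1 (1 : R) (i + 2)) + aeval ξ (dickson 1 (1 : R) i) := by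
  simp [dickson_add_two]

theorem aeval_dickson_one_one_zero : aeval ξ (dickson 1 (1 : R) 0) = 2 := by
  rw [dickson_zero]
  norm_num [map_ofNat]

theorem mul_mem_span_aeval_dickson_one_one {n : ℕ} (hn : 1 < n)
    (hξn : aeval ξ (dickson 1 (1 : R) n) = 0) {y : A}
    (hy : y ∈ Submodule.span R ((fun i ↦ aeval ξ (dickson 1 (1 : R) i)) '' Set.Iio n)) :
    ξ * y ∈ Submodule.span R ((fun i ↦ aeval ξ (dickson 1 (1 : R) i)) '' Set.Iio n) := by
  set M := Submodule.span R ((fun i ↦ aeval ξ (dickson 1 (1 : R) i)) '' Set.Iio n)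
  have hgen {i : ℕ} (hi : i < n) : aeval ξ (dickson 1 (1 : R) i) ∈ M :=
    Submodule.subset_span ⟨i, hi, rfl⟩
  induction hy using Submodule.span_induction with
  | mem g hg =>
    obtain ⟨i, hi : i < n, rfl⟩ := hg
    beta_reduce
    rcases i with _ | j
    · have h := M.add_mem (hgen hn) (hgen hn)
      rwa [dickson_one, aeval_X, ← mul_two, ← aeval_dickson_one_one_zero (R := R)] at h
    · rw [mul_aeval_dickson_one_one]
      rcases (show j + 2 < n ∨ j + 2 = n by omega) with hj | hj
      · exact M.add_mem (hgen hj) (hgen (by omega))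
      · rw [hj, hξn, zero_add]; exact hgen (by omega)
  | zero => rw [mul_zero]; exact M.zero_mem
  | add a b _ _ ha hb => rw [mul_add]; exact M.add_mem ha hb
  | smul r a _ ha => rw [mul_smul_comm]; exact M.smul_mem r ha

theorem aeval_dickson_one_one_mem_map_mulLeft {n : ℕ} (hn : Even n)
    (hξn : aeval ξ (dickson 1 (1 : R) n) = 0) (i : ℕ) :
    aeval ξ (dickson 1 (1 : R) i) ∈
      (Subalgebra.toSubmodule (Algebra.adjoin R {ξ})).map (LinearMap.mulLeft R ξ) := by
  set J := (Subalgebra.toSubmodule (Algebra.adjoin R {ξ})).map (LinearMap.mulLeft R ξ)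
  have hJ {z : A} (hz : z ∈ Algebra.adjoin R {ξ}) : ξ * z ∈ J := ⟨z, hz, rfl⟩
  have hstep (j : ℕ) :
      aeval ξ (dickson 1 (1 : R) (j + 2)) + aeval ξ (dickson 1 (1 : R) j) ∈ J := by
    rw [← mul_aeval_dickson_one_one]
    exact hJ (aeval_mem_adjoin_singleton R ξ)
  have hperiod :=
    add_two_mul_mem_iff_of_add_mem (c := fun j ↦ aeval ξ (dickson 1 (1 : R) j)) hstep
  have h0 : aeval ξ (dickson 1 (1 : R) 0) ∈ J := by
    obtain ⟨m, rfl⟩ := hn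
    rw [← hperiod 0 m, zero_add, two_mul, hξn]
    exact J.zero_mem
  have h1 : aeval ξ (dickson 1 (1 : R) 1) ∈ J := by
    simpa [dickson_one] using hJ (one_mem _)
  obtain ⟨k, rfl | rfl⟩ := Nat.even_or_odd' i
  · simpa using (hperiod 0 k).mpr h0
  · simpa [add_comm] using (hperiod 1 k).mpr h1

theorem span_aeval_dickson_one_one_eq {n : ℕ} (h1n : 1 < n) (hn : Even n)
    (hξn : aeval ξ (dickson 1 (1 : R) n) = 0) :
    Submodule.span R ((fun i ↦ aeval ξ (dickson 1 (1 : R) i)) '' Set.Iio n) =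
      (Subalgebra.toSubmodule (Algebra.adjoin R {ξ})).map (LinearMap.mulLeft R ξ) := by
  refine le_antisymm ?_ ?_
  · rw [Submodule.span_le]
    rintro _ ⟨i, -, rfl⟩
    exact aeval_dickson_one_one_mem_map_mulLeft hn hξn i
  · rintro _ ⟨z, hz, rfl⟩
    have hξ : ξ ∈ Submodule.span R ((fun i ↦ aeval ξ (dickson 1 (1 : R) i)) '' Set.Iio n) :=
      Submodule.subset_span ⟨1, h1n, by simp [dickson_one]⟩
    rw [LinearMap.mulLeft_apply, mul_comm]
    exact mul_mem_of_mem_adjoin_singleton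
      (fun y hy ↦ mul_mem_span_aeval_dickson_one_one h1n hξn hy) hz hξ

end Dickson

theorem IsPrimitiveRoot.add_inv_eq_zero_of_four {K : Type*} [Field K] {ω : K}
    (hω : IsPrimitiveRoot ω 4) : ω + ω⁻¹ = 0 := by
  have hsq : ω ^ 2 = -1 :=
    (hω.pow (by norm_num) (by norm_num : 4 = 2 * 2)).eq_neg_one_of_two_right
  have hω0 : ω ≠ 0 := hω.ne_zero (by norm_num)
  field_simp
  linear_combination hsq

/-- With `K = ℚ(ζ + ζ⁻¹)` for `ζ` a primitive `2^r`-th root of unity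
(`r ≥ 5`), `n = 2^{r-2}`, `O_K = ℤ[ζ + ζ⁻¹]`, the `ℤ`-submodule of `O_K` spanned by
`{2e₀, e₁, …, e_{n-1}}` equals the principal ideal `(ζ + ζ⁻¹)·O_K = e₁·O_K`. -/
theorem span_eq_principal_ideal_e1
    (r n : ℕ) (hr : 5 ≤ r) (hn : n = 2 ^ (r - 2))
    (ζ : ℂ) (hζ : IsPrimitiveRoot ζ (2 ^ r))
    (ξ : ℚ⟮ζ + ζ⁻¹⟯) (hξ : (ξ : ℂ) = ζ + ζ⁻¹)
    (e : ℕ → ℚ⟮ζ + ζ⁻¹⟯) (he0 : e 0 = 1)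
    (he : ∀ i : ℕ, 1 ≤ i → ((e i : ℂ) = ζ ^ i + ζ⁻¹ ^ i))
    (I : Submodule ℤ ℚ⟮ζ + ζ⁻¹⟯)
    (hI : I = Submodule.span ℤ
      ({2 * e 0} ∪ (e '' {i : ℕ | 1 ≤ i ∧ i ≤ n - 1}))) :
    ∀ x : ℚ⟮ζ + ζ⁻¹⟯, x ∈ I ↔
      ∃ z ∈ Algebra.adjoin ℤ ({ξ} : Set ℚ⟮ζ + ζ⁻¹⟯), x = e 1 * z := by
  have h4n : 2 ^ r = n * 4 := by
    rw [hn, show 4 = 2 ^ 2 by rfl, ← pow_add, Nat.sub_add_cancel (by omega)]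
  have h1n : 1 < n := hn ▸ Nat.one_lt_two_pow (by omega)
  have hn2 : Even n := hn ▸ Nat.even_pow.mpr ⟨even_two, by omega⟩
  have hζ0 : ζ ≠ 0 := hζ.ne_zero (by positivity)
  have hcoe (i : ℕ) :
      ((aeval ξ (dickson 1 (1 : ℤ) i) : ℚ⟮ζ + ζ⁻¹⟯) : ℂ) = ζ ^ i + ζ⁻¹ ^ i := by
    rw [← IntermediateField.algebraMap_apply, ← aeval_algebraMap_apply,
      IntermediateField.algebraMap_apply, hξ,
      aeval_dickson_one_one_add_of_mul_eq_one (mul_inv_cancel₀ hζ0)]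
  have he' (i : ℕ) (hi : 1 ≤ i) : e i = aeval ξ (dickson 1 (1 : ℤ) i) :=
    Subtype.ext (by rw [he i hi, hcoe])
  have hξn : aeval ξ (dickson 1 (1 : ℤ) n) = 0 := by
    have hω : IsPrimitiveRoot (ζ ^ n) 4 := hζ.pow (by positivity) h4n
    exact Subtype.ext (by rw [hcoe, inv_pow, hω.add_inv_eq_zero_of_four]; rfl)
  have hgen : {2 * e 0} ∪ e '' {i : ℕ | 1 ≤ i ∧ i ≤ n - 1} =
      (fun i ↦ aeval ξ (dickson 1 (1 : ℤ) i)) '' Set.Iio n := by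
    have hIio : Set.Iio n = {0} ∪ {i : ℕ | 1 ≤ i ∧ i ≤ n - 1} := by
      ext i
      simp only [Set.mem_Iio, Set.mem_union, Set.mem_singleton_iff, Set.mem_ofPred_eq]
      omega
    rw [hIio, Set.image_union, Set.image_singleton, aeval_dickson_one_one_zero, he0, mul_one]
    exact congrArg _ (Set.image_congr fun i hi ↦ he' i hi.1)
  intro x
  rw [hI, hgen, span_aeval_dickson_one_one_eq h1n hn2 hξn, Submodule.mem_map, he' 1 le_rfl]
  simp [dickson_one, eq_comm]
end

section
/- Let p ≥ 7 be a prime, n = (p-1)/2, ζ a primitive p-th root of unity in ℂ, K = ℚ(ζ + ζ^{-1}), e_j = ζ^j + ζ^{-j}, and α = 2 - e_1. Define f_i = Σ_{j=i}^{n} e_j for 1 ≤ i ≤ n. Then f_1, …, f_n is a ℤ-basis of O_K = ℤ[ζ + ζ^{-1}] and Tr_{K/ℚ}(α f_i f_l) = p if i = l, and Tr_{K/ℚ}(α f_i f_l) = 0 if i ≠ l. Equivalently, the lattice (1/√p)·σ_α(O_K) is a rotated (isometric) copy of ℤ^n. -/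
/-!
Index `f` from `0` and put `gₖ = ζ^(k+1) - ζ^(-k)`. Since `ζ^(2n+1) = 1`, the sum `fₖ` telescopes to
`(1 - ζ) fₖ = gₖ`, and `(1 - ζ⁻¹) fₗ = -ζ⁻¹ gₗ`, so with `α = (1 - ζ)(1 - ζ⁻¹)`
  `α fᵢ fₗ = ζ^(i-l) + ζ^(l-i) - ζ^(i+l+1) - ζ^(-(i+l+1))`.
Traces from `K` are computed in `ℚ(ζ)`, which has degree 2 over `K` because `ζ` is not real;
there `Tr(ζ^m)` is `p - 1` or `-1` according as `p ∣ m` or not, which gives the Gram matrix `p·I`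
and hence linear independence.
The `gₖ` satisfy `ξ gₖ = gₖ₋₁ + gₖ₊₁`, so `f₀ = -1`, `ξ f₀ = f₁ - f₀`, `ξ fₖ = fₖ₋₁ + fₖ₊₁` and
`fₙ = 0`: the `ℤ`-span of the `fₖ` is stable under `ξ` and contains `1`, and every `fₖ` is a
polynomial in `ξ`.
-/

open IntermediateField Polynomial Module

theorem one_sub_mul_sum_Icc_pow_add_pow {R : Type*} [CommRing R] {z w : R} (hzw : z * w = 1)
    {n k : ℕ} (hz : z ^ (2 * n + 1) = 1) (hk : k ≤ n) :
    (1 - z) * ∑ j ∈ Finset.Icc (k + 1) n, (z ^ j + w ^ j) = z ^ (k + 1) - w ^ k := by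
  have htel : ∀ m, k ≤ m → (1 - z) * ∑ j ∈ Finset.Icc (k + 1) m, (z ^ j + w ^ j) =
      z ^ (k + 1) - z ^ (m + 1) + w ^ m - w ^ k := by
    intro m hm
    induction m, hm using Nat.le_induction with
    | base => simp
    | succ m hm ih =>
      rw [Finset.sum_Icc_succ_top (by omega), mul_add, ih]
      linear_combination (-w ^ m) * hzw
  have hzn : z ^ (n + 1) = w ^ n := by
    calc z ^ (n + 1) = z ^ (n + 1) * (z * w) ^ n := by rw [hzw, one_pow, mul_one]
      _ = z ^ (2 * n + 1) * w ^ n := by ring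
      _ = w ^ n := by rw [hz, one_mul]
  rw [htel n hk, hzn]
  ring

theorem LinearMap.BilinForm.linearIndependent_int_of_apply_eq_ite {V ι : Type*}
    [AddCommGroup V] [Module ℚ V] [DecidableEq ι] {B : LinearMap.BilinForm ℚ V} {v : ι → V}
    {c : ℚ} (hc : c ≠ 0) (hB : ∀ i j, B (v i) (v j) = if i = j then c else 0) :
    LinearIndependent ℤ v :=
  (B.linearIndependent_of_iIsOrtho (fun i j hij => by simpa [hij] using hB i j)
    (fun i => by simp [hB, hc])).restrict_scalars' ℤ

section Recurrence

variable {R A : Type*} [CommRing R] [CommRing A] [Algebra R A]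

theorem Algebra.toSubmodule_adjoin_singleton_le {x : A} {N : Submodule R A} (h1 : 1 ∈ N)
    (hx : ∀ y ∈ N, x * y ∈ N) : Subalgebra.toSubmodule (Algebra.adjoin R {x}) ≤ N := by
  rw [Algebra.adjoin_eq_span, Submodule.span_le]
  intro y hy
  obtain ⟨k, rfl⟩ := Submonoid.mem_closure_singleton.mp hy
  clear hy
  induction k with
  | zero => simpa using h1
  | succ k ih => rw [pow_succ']; exact hx _ ih

theorem Algebra.span_range_eq_adjoin_of_recurrence {x : A} {n : ℕ} {F : ℕ → A} (h0 : F 0 = -1)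
    (h1 : x * F 0 = F 1 - F 0) (hrec : ∀ k, k + 2 ≤ n → x * F (k + 1) = F k + F (k + 2))
    (hn : F n = 0) :
    Submodule.span R (Set.range fun k : Fin n => F k) =
      Subalgebra.toSubmodule (Algebra.adjoin R {x}) := by
  set N := Submodule.span R (Set.range fun k : Fin n => F k)
  have hx : x ∈ Algebra.adjoin R {x} := Algebra.self_mem_adjoin_singleton R x
  have hF0 : F 0 ∈ Algebra.adjoin R {x} := h0 ▸ neg_mem (one_mem _)
  have hadjoin : ∀ k, k ≤ n → F k ∈ Algebra.adjoin R {x} := by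
    refine Nat.twoStepInduction (fun _ => hF0) (fun _ => ?_) fun k hk hk1 hk2 => ?_
    · rw [eq_add_of_sub_eq h1.symm]
      exact add_mem (mul_mem hx hF0) hF0
    · rw [eq_sub_of_add_eq' (hrec k hk2).symm]
      exact sub_mem (mul_mem hx (hk1 (by omega))) (hk (by omega))
  have hN : ∀ k, k ≤ n → F k ∈ N := by
    intro k hk
    rcases hk.lt_or_eq with hk | rfl
    · exact Submodule.subset_span ⟨⟨k, hk⟩, rfl⟩
    · exact hn ▸ N.zero_mem
  refine le_antisymm ?_ (Algebra.toSubmodule_adjoin_singleton_le ?_ fun y hy => ?_)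
  · rw [Submodule.span_le]
    rintro _ ⟨k, rfl⟩
    exact hadjoin k k.2.le
  · simpa [h0] using N.neg_mem (hN 0 n.zero_le)
  · suffices N ≤ N.comap (LinearMap.mulLeft R x) from this hy
    rw [Submodule.span_le]
    rintro _ ⟨⟨k, hk⟩, rfl⟩
    change x * F k ∈ N
    cases k with
    | zero => rw [h1]; exact sub_mem (hN 1 hk) (hN 0 n.zero_le)
    | succ k => rw [hrec k hk]; exact add_mem (hN k (by omega)) (hN (k + 2) hk)

end Recurrence

theorem Polynomial.nextCoeff_cyclotomic_prime (p : ℕ) [hp : Fact p.Prime] :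
    (cyclotomic p ℚ).nextCoeff = 1 := by
  have hdeg : (cyclotomic p ℚ).natDegree = p - 1 := by
    rw [natDegree_cyclotomic, Nat.totient_prime hp.out]
  have := hp.out.two_le
  rw [nextCoeff_of_natDegree_pos (by omega), hdeg, cyclotomic_prime, finsetSum_coeff]
  simp only [coeff_X_pow]
  rw [Finset.sum_ite_eq, if_pos (Finset.mem_range.mpr (by omega))]

section Trace

variable {p : ℕ} [hp : Fact p.Prime] {L : Type*} [Field L] [Algebra ℚ L]
  [IsCyclotomicExtension {p} ℚ L] {η : L}

theorem IsPrimitiveRoot.trace_eq_neg_one (hη : IsPrimitiveRoot η p) :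
    Algebra.trace ℚ L η = -1 := by
  have := (hη.powerBasis ℚ).trace_gen_eq_nextCoeff_minpoly
  rwa [powerBasis_gen,
    ← hη.minpoly_eq_cyclotomic_of_irreducible (cyclotomic.irreducible_rat hp.out.pos),
    nextCoeff_cyclotomic_prime] at this

theorem IsPrimitiveRoot.trace_zpow (hη : IsPrimitiveRoot η p) (m : ℤ) :
    Algebra.trace ℚ L (η ^ m) = if (p : ℤ) ∣ m then (p - 1 : ℚ) else -1 := by
  split_ifs with hm
  · rw [(hη.zpow_eq_one_iff_dvd m).mpr hm, ← map_one (algebraMap ℚ L), Algebra.trace_algebraMap,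
      IsCyclotomicExtension.finrank L (cyclotomic.irreducible_rat hp.out.pos),
      Nat.totient_prime hp.out]
    simp [Nat.cast_sub hp.out.one_le]
  · refine (hη.zpow_of_gcd_eq_one m ?_).trace_eq_neg_one
    rw [Int.gcd_eq_natAbs_gcd_natAbs, Int.natAbs_natCast]
    exact ((Nat.Prime.coprime_iff_not_dvd hp.out).mpr (by rwa [← Int.natCast_dvd])).symm

end Trace

theorem IntermediateField.finrank_adjoin_simple_eq_two {F E : Type*} [Field F] [Field E]
    [Algebra F E] {x : E} {q : F[X]} (hq : q.Monic) (hq2 : q.natDegree = 2) (hqx : aeval x q = 0)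
    (hx : x ∉ (algebraMap F E).range) : finrank F F⟮x⟯ = 2 := by
  have hint : IsIntegral F x := ⟨q, hq, by rwa [← aeval_def]⟩
  have hle := hq2 ▸ natDegree_le_of_dvd (minpoly.dvd F x hqx) hq.ne_zero
  have hne := mt minpoly.natDegree_eq_one_iff.mp hx
  have hpos := minpoly.natDegree_pos hint
  rw [adjoin.finrank hint]
  omega

theorem IntermediateField.adjoin_add_inv_le (F : Type*) {E : Type*} [Field F] [Field E]
    [Algebra F E] (x : E) : F⟮x + x⁻¹⟯ ≤ F⟮x⟯ := by
  rw [adjoin_simple_le_iff]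
  have := mem_adjoin_simple_self F x
  exact add_mem this (inv_mem this)

section RealSubfield

variable {p : ℕ} [hp : Fact p.Prime] {ζ : ℂ} (hζ : IsPrimitiveRoot ζ p)
include hζ

local notation "K" => ℚ⟮ζ + ζ⁻¹⟯

local notation "L" => extendScalars (adjoin_add_inv_le ℚ ζ)

theorem IsPrimitiveRoot.adjoin_add_inv_le_fieldRange_ofReal :
    K ≤ (Complex.ofRealAm.restrictScalars ℚ).fieldRange := by
  rw [adjoin_simple_le_iff, Complex.inv_eq_conj (hζ.norm'_eq_one hp.out.ne_zero), Complex.add_conj]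
  exact ⟨2 * ζ.re, by simp⟩

theorem IsPrimitiveRoot.notMem_adjoin_add_inv_s12 (hp2 : p ≠ 2) : ζ ∉ K := by
  intro hmem
  obtain ⟨r, hr⟩ := hζ.adjoin_add_inv_le_fieldRange_ofReal hmem
  have hinv : ζ⁻¹ = ζ := by
    rw [Complex.inv_eq_conj (hζ.norm'_eq_one hp.out.ne_zero), ← hr]
    simp
  have hsq : ζ ^ 2 = 1 := by
    rw [sq]
    nth_rewrite 2 [← hinv]
    exact mul_inv_cancel₀ (hζ.ne_zero hp.out.ne_zero)
  exact hp2 ((Nat.prime_dvd_prime_iff_eq hp.out Nat.prime_two).mp (hζ.dvd_of_pow_eq_one 2 hsq))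

theorem IsPrimitiveRoot.isCyclotomicExtension_extendScalars : IsCyclotomicExtension {p} ℚ L := by
  have : IsCyclotomicExtension {p} ℚ ℚ⟮ζ⟯.toSubalgebra := by
    rw [adjoin_simple_toSubalgebra_of_isAlgebraic
      (hζ.isIntegral hp.out.pos).tower_top.isAlgebraic]
    exact hζ.adjoin_isCyclotomicExtension ℚ
  -- `extendScalars` keeps the carrier and the `ℚ`-algebra structure of `ℚ⟮ζ⟯`
  exact IsCyclotomicExtension.equiv _ _ _ (AlgEquiv.refl : ℚ⟮ζ⟯.toSubalgebra ≃ₐ[ℚ] _)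

theorem IsPrimitiveRoot.finrank_extendScalars (hp2 : p ≠ 2) : finrank K L = 2 := by
  rw [extendScalars_adjoin]
  refine finrank_adjoin_simple_eq_two (q := X ^ 2 - C (AdjoinSimple.gen ℚ (ζ + ζ⁻¹)) * X + 1)
    (by monicity!) (by compute_degree!) ?_ ?_
  · have hζ0 := hζ.ne_zero hp.out.ne_zero
    simp only [map_add, aeval_sub, map_pow, aeval_X, map_mul, aeval_C,
      IntermediateField.algebraMap_apply, AdjoinSimple.coe_gen, map_one]
    field_simp
    ring
  · rintro ⟨x, hx⟩
    apply hζ.notMem_adjoin_add_inv_s12 hp2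
    convert x.2
    exact hx.symm

theorem IsPrimitiveRoot.two_mul_trace_adjoin_add_inv_s12 (hp2 : p ≠ 2) (x : K) :
    2 * Algebra.trace ℚ K x = Algebra.trace ℚ L (algebraMap K L x) := by
  have := hζ.isCyclotomicExtension_extendScalars
  have := IsCyclotomicExtension.finiteDimensional {p} ℚ L
  have := FiniteDimensional.left ℚ K L
  have := FiniteDimensional.right ℚ K L
  have := Module.Free.of_divisionRing K L
  rw [← Algebra.trace_trace (S := K) (T := L), Algebra.trace_algebraMap,
    hζ.finrank_extendScalars hp2, map_nsmul, two_nsmul, two_mul]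

theorem IsPrimitiveRoot.trace_mul_mul {n : ℕ} (hn : p = 2 * n + 1) {a x y : K}
    (ha : (a : ℂ) = (1 - ζ) * (1 - ζ⁻¹)) {i l : ℕ} (hi : i < n) (hl : l < n)
    (hx : (1 - ζ) * x = ζ ^ (i + 1) - ζ⁻¹ ^ i) (hy : (1 - ζ) * y = ζ ^ (l + 1) - ζ⁻¹ ^ l) :
    Algebra.trace ℚ K (a * x * y) = if i = l then (p : ℚ) else 0 := by
  have := hζ.isCyclotomicExtension_extendScalars
  set η : L := ⟨ζ, mem_adjoin_simple_self ℚ ζ⟩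
  have hη : IsPrimitiveRoot η p := IsPrimitiveRoot.coe_submonoidClass_iff.mp hζ
  have hζ0 := hζ.ne_zero hp.out.ne_zero
  have himage : algebraMap K L (a * x * y) =
      η ^ ((i : ℤ) - l) - η ^ ((i : ℤ) + l + 1) - η ^ (-((i : ℤ) + l + 1)) + η ^ ((l : ℤ) - i) := by
    apply (IntermediateField.val _).injective
    have hprod : ((a * x * y : K) : ℂ) = ((1 - ζ) * x) * (-ζ⁻¹ * ((1 - ζ) * y)) := by
      push_cast [ha]
      field_simp
      ring
    simp only [map_sub, map_add, map_zpow₀]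
    change ((a * x * y : K) : ℂ) = ζ ^ _ - ζ ^ _ - ζ ^ _ + ζ ^ _
    rw [hprod, hx, hy]
    simp only [zpow_sub₀ hζ0, zpow_add₀ hζ0, zpow_neg, zpow_natCast, zpow_one, inv_pow]
    field_simp
    ring
  have hndvd : ∀ m : ℤ, m ≠ 0 → |m| < p → ¬ (p : ℤ) ∣ m := fun m h0 hm h =>
    h0 (Int.eq_zero_of_abs_lt_dvd h hm)
  have key := hζ.two_mul_trace_adjoin_add_inv_s12 (by omega) (a * x * y)
  rw [himage, map_add, map_sub, map_sub, hη.trace_zpow, hη.trace_zpow, hη.trace_zpow,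
    hη.trace_zpow, if_neg (hndvd ((i : ℤ) + l + 1) (by omega) (by rw [abs_lt]; omega)),
    if_neg (hndvd (-((i : ℤ) + l + 1)) (by omega) (by rw [abs_lt]; omega))] at key
  split_ifs with hil
  · subst hil
    simp only [sub_self, dvd_zero, if_true] at key
    linarith
  · rw [if_neg (hndvd ((i : ℤ) - l) (by omega) (by rw [abs_lt]; omega)),
      if_neg (hndvd ((l : ℤ) - i) (by omega) (by rw [abs_lt]; omega))] at key
    linarith

end RealSubfield

theorem span_range_eq_adjoin_add_inv {ζ : ℂ} (hζ0 : ζ ≠ 0) (hζ1 : ζ ≠ 1) {n : ℕ} (hn : 0 < n)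
    {ξ : ℚ⟮ζ + ζ⁻¹⟯} (hξ : (ξ : ℂ) = ζ + ζ⁻¹) {F : ℕ → ℚ⟮ζ + ζ⁻¹⟯}
    (hF : ∀ k ≤ n, (1 - ζ) * F k = ζ ^ (k + 1) - ζ⁻¹ ^ k) (hFn : F n = 0) :
    Submodule.span ℤ (Set.range fun k : Fin n => F k) =
      Subalgebra.toSubmodule (Algebra.adjoin ℤ {ξ}) := by
  have hu : ζ * ζ⁻¹ = 1 := mul_inv_cancel₀ hζ0
  have hcancel : ∀ x y : ℚ⟮ζ + ζ⁻¹⟯, (1 - ζ) * x = (1 - ζ) * y → x = y := fun x y h =>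
    Subtype.coe_injective (mul_left_cancel₀ (sub_ne_zero.mpr hζ1.symm) h)
  refine Algebra.span_range_eq_adjoin_of_recurrence (hcancel _ _ ?_) (hcancel _ _ ?_)
    (fun k hk => hcancel _ _ ?_) hFn
  · push_cast
    linear_combination hF 0 n.zero_le
  · push_cast [hξ]
    linear_combination (ζ + ζ⁻¹) * hF 0 n.zero_le - hF 1 hn + hF 0 n.zero_le + hu
  · push_cast [hξ]
    linear_combination (ζ + ζ⁻¹) * hF (k + 1) (by omega) - hF k (by omega) - hF (k + 2) hk +
      (ζ ^ (k + 1) - ζ⁻¹ ^ k) * hu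

theorem rotated_Zn_odd_prime_general
    (p n : ℕ) (hp : p.Prime) (hn : p = 2 * n + 1)
    (ζ : ℂ) (hζ : IsPrimitiveRoot ζ p)
    (ξ : ℚ⟮ζ + ζ⁻¹⟯) (hξ : (ξ : ℂ) = ζ + ζ⁻¹)
    (e : ℕ → ℚ⟮ζ + ζ⁻¹⟯)
    (he : ∀ j : ℕ, 1 ≤ j → ((e j : ℂ) = ζ ^ j + ζ⁻¹ ^ j))
    (α : ℚ⟮ζ + ζ⁻¹⟯) (hα : α = 2 - e 1)
    (f : Fin n → ℚ⟮ζ + ζ⁻¹⟯)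
    (hf : ∀ k : Fin n, f k = ∑ j ∈ Finset.Icc ((k : ℕ) + 1) n, e j) :
    LinearIndependent ℤ f ∧
    Submodule.span ℤ (Set.range f) =
      Subalgebra.toSubmodule (Algebra.adjoin ℤ ({ξ} : Set ℚ⟮ζ + ζ⁻¹⟯)) ∧
    ∀ i l : Fin n, Algebra.trace ℚ ℚ⟮ζ + ζ⁻¹⟯ (α * f i * f l) =
      if i = l then (p : ℚ) else 0 := by
  have := Fact.mk hp
  have hζ0 : ζ ≠ 0 := hζ.ne_zero hp.ne_zero
  set F : ℕ → ℚ⟮ζ + ζ⁻¹⟯ := fun k => ∑ j ∈ Finset.Icc (k + 1) n, e j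
  have hfF : f = fun k : Fin n => F k := funext hf
  have hF : ∀ k ≤ n, (1 - ζ) * F k = ζ ^ (k + 1) - ζ⁻¹ ^ k := fun k hk => by
    rw [← one_sub_mul_sum_Icc_pow_add_pow (mul_inv_cancel₀ hζ0) (hn ▸ hζ.pow_eq_one) hk]
    push_cast [F]
    exact congrArg _ (Finset.sum_congr rfl fun j hj => he j (by grind))
  have hαC : (α : ℂ) = (1 - ζ) * (1 - ζ⁻¹) := by
    have h2 : ((2 : ℚ⟮ζ + ζ⁻¹⟯) : ℂ) = 2 := map_ofNat (algebraMap ℚ⟮ζ + ζ⁻¹⟯ ℂ) 2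
    rw [hα]
    push_cast [he 1 le_rfl, h2]
    field_simp
    ring
  have htrace : ∀ i l : Fin n, Algebra.trace ℚ ℚ⟮ζ + ζ⁻¹⟯ (α * f i * f l) =
      if i = l then (p : ℚ) else 0 := fun i l => by
    simpa [hfF, Fin.val_inj] using hζ.trace_mul_mul hn hαC i.2 l.2 (hF i i.2.le) (hF l l.2.le)
  refine ⟨?_, ?_, htrace⟩
  · exact ((Algebra.traceForm ℚ _).comp (LinearMap.mulLeft ℚ α) LinearMap.id
      ).linearIndependent_int_of_apply_eq_ite (Nat.cast_ne_zero.mpr hp.ne_zero) htrace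
  · rw [hfF]
    exact span_range_eq_adjoin_add_inv hζ0 (hζ.ne_one hp.one_lt) (by have := hp.one_lt; omega)
      hξ hF (by simp [F])

/-- With `K = ℚ(ζ + ζ⁻¹)` for `ζ` a primitive `p`-th root of unity
(`p ≥ 7` prime), `n = (p-1)/2`, `α = 2 - e₁` and `fᵢ = Σ_{j=i}^{n} eⱼ`
(`1 ≤ i ≤ n`, `0`-indexed below), the family `f` is a `ℤ`-basis of
`O_K = ℤ[ζ + ζ⁻¹]` and `Tr(α fᵢ fₗ) = p` if `i = l` and `0` otherwise:
the lattice `(1/√p)·σ_α(O_K)` is a rotated copy of `ℤⁿ`. -/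
theorem rotated_Zn_odd_prime
    (p n : ℕ) (hp : p.Prime) (hp7 : 7 ≤ p) (hn : p = 2 * n + 1)
    (ζ : ℂ) (hζ : IsPrimitiveRoot ζ p)
    (ξ : ℚ⟮ζ + ζ⁻¹⟯) (hξ : (ξ : ℂ) = ζ + ζ⁻¹)
    (e : ℕ → ℚ⟮ζ + ζ⁻¹⟯)
    (he : ∀ j : ℕ, 1 ≤ j → ((e j : ℂ) = ζ ^ j + ζ⁻¹ ^ j))
    (α : ℚ⟮ζ + ζ⁻¹⟯) (hα : α = 2 - e 1)
    (f : Fin n → ℚ⟮ζ + ζ⁻¹⟯)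
    (hf : ∀ k : Fin n, f k = ∑ j ∈ Finset.Icc ((k : ℕ) + 1) n, e j) :
    LinearIndependent ℤ f ∧
    Submodule.span ℤ (Set.range f) =
      Subalgebra.toSubmodule (Algebra.adjoin ℤ ({ξ} : Set ℚ⟮ζ + ζ⁻¹⟯)) ∧
    ∀ i l : Fin n, Algebra.trace ℚ ℚ⟮ζ + ζ⁻¹⟯ (α * f i * f l) =
      if i = l then (p : ℚ) else 0 :=
  rotated_Zn_odd_prime_general p n hp hn ζ hζ ξ hξ e he α hα f hf
end

section
/- For n = 2^{r-2}, let d_Z(r) = 2^{(1-(r-1)·2^{r-2})/2} (the minimum product distance of the rotated ℤ^n-lattice, which equals |d_K|^{-1/2} for K = ℚ(ζ_{2^r} + ζ_{2^r}^{-1})) and d_D(r) = 2^{(3 - r·2^{r-2})/2} (the relative minimum product distance of the rotated D_n-lattice constructed from a principal ideal of ℤ[ζ_{2^r} + ζ_{2^r}^{-1}]). Then the limit as r → ∞ of (d_Z(r))^{1/2^{r-2}} / (d_D(r))^{1/2^{r-2}} equals √2. -/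
/-!
Both quantities are powers of two, so the ratio of their `n`-th roots is `2 ^ ((a - b) / n)` with
`a - b = (n - 2) / 2`, i.e. it equals `2 ^ (1/2 - 1/n)`, which tends to `2 ^ (1/2) = √2`.
-/

open Filter Topology

lemma rpow_rpow_div_rpow_rpow {b : ℝ} (hb : 0 < b) (x y t : ℝ) :
    (b ^ x) ^ t / (b ^ y) ^ t = b ^ ((x - y) * t) := by
  rw [← Real.rpow_mul hb.le, ← Real.rpow_mul hb.le, ← Real.rpow_sub hb, sub_mul]

lemma exponent_difference_mul_inv (r N : ℝ) (hN : N ≠ 0) :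
    ((1 - (r - 1) * N) / 2 - (3 - r * N) / 2) * (1 / N) = 1 / 2 - 1 / N := by
  field_simp
  ring

lemma tendsto_one_div_two_pow_sub_two :
    Tendsto (fun r : ℕ => (1 : ℝ) / 2 ^ (r - 2)) atTop (𝓝 0) :=
  tendsto_const_nhds.div_atTop
    ((tendsto_pow_atTop_atTop_of_one_lt one_lt_two).comp (tendsto_sub_atTop_nat 2))

lemma tendsto_two_rpow_half_sub {f : ℕ → ℝ} (hf : Tendsto f atTop (𝓝 0)) :
    Tendsto (fun r => (2 : ℝ) ^ (1 / 2 - f r)) atTop (𝓝 (Real.sqrt 2)) := by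
  rw [Real.sqrt_eq_rpow]
  have hexp : Tendsto (fun r => 1 / 2 - f r) atTop (𝓝 (1 / 2)) := by
    simpa using tendsto_const_nhds.sub hf
  exact (Real.continuousAt_const_rpow two_ne_zero).tendsto.comp hexp

/-- With `n = 2^{r-2}`, `d_Z(r) = 2^{(1-(r-1)·2^{r-2})/2}` the
minimum product distance of the rotated `ℤⁿ`-lattice and
`d_D(r) = 2^{(3-r·2^{r-2})/2}` the relative minimum product distance of the rotated
`Dₙ`-lattice, the ratio of their `n`-th roots tends to `√2` as `r → ∞`. -/
theorem limit_ratio_nth_roots_eq_sqrt_two :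
    Filter.Tendsto
      (fun r : ℕ =>
        ((2 : ℝ) ^ (((1 : ℝ) - ((r : ℝ) - 1) * 2 ^ (r - 2)) / 2)) ^ ((1 : ℝ) / 2 ^ (r - 2)) /
        ((2 : ℝ) ^ (((3 : ℝ) - (r : ℝ) * 2 ^ (r - 2)) / 2)) ^ ((1 : ℝ) / 2 ^ (r - 2)))
      Filter.atTop (nhds (Real.sqrt 2)) := by
  refine (tendsto_two_rpow_half_sub tendsto_one_div_two_pow_sub_two).congr fun r => ?_
  rw [rpow_rpow_div_rpow_rpow two_pos,
    exponent_difference_mul_inv _ _ (pow_ne_zero _ two_ne_zero)]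
end
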